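/- arXiv:1612.05508 — 2 statements merged into one kernel-verified Lean document; each statement's English description precedes it below -/
import Mathlib

section
/- Let p > 1 and suppose f = (f_1,…,f_k) is not constant. Then for every λ > 0 the unique minimizer u^λ of G satisfies min_j f_j < u^λ_i < max_j f_j for every i. In particular f itself is never a minimizer. -/
/-- Predecessor index: `i - 1` (and `0` maps to `0`). -/
def pred {k : ℕ} (i : Fin k) : Fin k :=
  ⟨i.val - 1, Nat.lt_of_le_of_lt (Nat.sub_le _ _) i.isLt⟩

/-- The discrete energy `G(v) = ∑_{i≥2} |v_i - v_{i-1}| + λ ∑_i L_i |f_i - v_i|^p`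
(indices written with `Fin k`, i.e. `0,…,k-1`). -/
noncomputable def G (k : ℕ) (lam p : ℝ) (L f : Fin k → ℝ) (v : Fin k → ℝ) : ℝ :=
  (∑ i : Fin k, if i.val = 0 then 0 else |v i - v (pred i)|) +
    lam * ∑ i : Fin k, L i * |f i - v i| ^ p

/-!
Clamping a competitor from below at a level `m ≤ min f` strictly lowers the energy, so a
minimizer satisfies `m ≤ u`. If `u` touches `m`, raise the whole plateau `{u = m}` by a small
`ε > 0`: every edge joining the plateau to the rest shortens by `ε`, while the fidelity term has
derivative `-p λ ∑_{u_j = m} L_j (f_j - m)^(p-1)` at `ε = 0` (differentiable because `p > 1`).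
Minimality makes this right derivative nonnegative, which forces the plateau to be everything
and `f ≡ m`. The upper bound follows from the symmetry `G(-f, -v) = G(f, v)`.
-/

open Finset Filter Topology

theorem nonneg_of_hasDerivAt_of_eventually_ge {h : ℝ → ℝ} {d x : ℝ} (hd : HasDerivAt h d x)
    (hmin : ∀ᶠ t in 𝓝[>] 0, h x ≤ h (x + t)) : 0 ≤ d := by
  refine ge_of_tendsto hd.tendsto_slope_zero_right ?_
  filter_upwards [hmin, self_mem_nhdsWithin] with t ht (htpos : 0 < t)
  exact smul_nonneg (inv_nonneg.2 htpos.le) (sub_nonneg.2 ht)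

theorem iff_of_forall_iff_pred {k : ℕ} {P : Fin k → Prop}
    (h : ∀ i : Fin k, i.val ≠ 0 → (P i ↔ P (pred i))) (i j : Fin k) : P i ↔ P j := by
  suffices key : ∀ (n : ℕ) (hn : n < k), P ⟨n, hn⟩ ↔ P ⟨0, by omega⟩ by
    exact (key i i.isLt).trans (key j j.isLt).symm
  intro n
  induction n with
  | zero => exact fun _ => Iff.rfl
  | succ n ih => exact fun hn => (h ⟨n + 1, hn⟩ n.succ_ne_zero).trans (ih (by omega))

theorem abs_sub_max_le {a b c : ℝ} (hc : c ≤ a) : |a - max b c| ≤ |a - b| := by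
  rcases le_total c b with hb | hb
  · rw [max_eq_left hb]
  · rw [max_eq_right hb, abs_of_nonneg (by linarith), abs_of_nonneg (by linarith)]
    linarith

theorem abs_sub_max_lt {a b c : ℝ} (hc : c ≤ a) (hb : b < c) : |a - max b c| < |a - b| := by
  rw [max_eq_right hb.le, abs_of_nonneg (by linarith), abs_of_nonneg (by linarith)]
  linarith

theorem abs_add_indicator_sub {a b m ε : ℝ} (hε : 0 ≤ ε) (ha : a ≠ m → m + ε ≤ a)
    (hb : b ≠ m → m + ε ≤ b) :
    |(a + ε * if a = m then 1 else 0) - (b + ε * if b = m then 1 else 0)| =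
      |a - b| - ε * if (a = m ↔ b = m) then 0 else 1 := by
  by_cases ham : a = m <;> by_cases hbm : b = m
  · simp [ham, hbm]
  · have := hb hbm
    simp only [ham, hbm, if_true, if_false, iff_false, not_true_eq_false]
    rw [abs_of_nonpos (by linarith), abs_of_nonpos (by linarith)]
    ring
  · have := ha ham
    simp only [ham, hbm, if_true, if_false, false_iff, not_true_eq_false]
    rw [abs_of_nonneg (by linarith), abs_of_nonneg (by linarith)]
    ring
  · simp [ham, hbm]

section Energy

variable {k : ℕ}

noncomputable def totalVariation (v : Fin k → ℝ) : ℝ :=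
  ∑ i : Fin k, if i.val = 0 then 0 else |v i - v (pred i)|

noncomputable def fidelity (p : ℝ) (L f v : Fin k → ℝ) : ℝ :=
  ∑ i : Fin k, L i * |f i - v i| ^ p

theorem G_eq (lam p : ℝ) (L f v : Fin k → ℝ) :
    G k lam p L f v = totalVariation v + lam * fidelity p L f v := rfl

theorem totalVariation_neg (v : Fin k → ℝ) : totalVariation (-v) = totalVariation v := by
  refine sum_congr rfl fun i _ => ?_
  simp only [Pi.neg_apply, neg_sub_neg, abs_sub_comm]

theorem fidelity_neg (p : ℝ) (L f v : Fin k → ℝ) :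
    fidelity p L (-f) (-v) = fidelity p L f v := by
  refine sum_congr rfl fun i _ => ?_
  simp only [Pi.neg_apply, neg_sub_neg, abs_sub_comm]

theorem G_neg (lam p : ℝ) (L f v : Fin k → ℝ) :
    G k lam p L (-f) (-v) = G k lam p L f v := by
  rw [G_eq, G_eq, totalVariation_neg, fidelity_neg]

theorem totalVariation_max_le (v : Fin k → ℝ) (c : ℝ) :
    totalVariation (fun i => max (v i) c) ≤ totalVariation v :=
  sum_le_sum fun i _ => by
    split_ifs
    exacts [le_rfl, abs_max_sub_max_le_abs _ _ _]

theorem fidelity_max_lt {p c : ℝ} (hp : 0 < p) {L f v : Fin k → ℝ} (hL : ∀ i, 0 < L i)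
    (hc : ∀ i, c ≤ f i) (hv : ∃ i, v i < c) :
    fidelity p L f (fun i => max (v i) c) < fidelity p L f v := by
  obtain ⟨i, hi⟩ := hv
  refine sum_lt_sum (fun j _ => ?_) ⟨i, mem_univ i, ?_⟩
  · exact mul_le_mul_of_nonneg_left
      (Real.rpow_le_rpow (abs_nonneg _) (abs_sub_max_le (hc j)) hp.le) (hL j).le
  · exact mul_lt_mul_of_pos_left
      (Real.rpow_lt_rpow (abs_nonneg _) (abs_sub_max_lt (hc i) hi) hp) (hL i)

end Energy

section Plateau

variable {k : ℕ}

noncomputable def mixedEdges (u : Fin k → ℝ) (m : ℝ) : Finset (Fin k) :=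
  univ.filter fun i => i.val ≠ 0 ∧ ¬(u i = m ↔ u (pred i) = m)

theorem totalVariation_add_plateau {u : Fin k → ℝ} {m ε : ℝ} (hε : 0 ≤ ε)
    (hgap : ∀ j, u j ≠ m → m + ε ≤ u j) :
    totalVariation (fun j => u j + ε * if u j = m then 1 else 0) =
      totalVariation u - ε * #(mixedEdges u m) := by
  rw [mixedEdges, natCast_card_filter, mul_sum, totalVariation, totalVariation,
    ← sum_sub_distrib]
  refine sum_congr rfl fun i _ => ?_
  by_cases hi : i.val = 0
  · simp [hi]
  · simp only [hi, if_false, ne_eq, not_false_eq_true, true_and, ite_not]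
    exact abs_add_indicator_sub hε (hgap i) (hgap (pred i))

theorem eq_of_mixedEdges_eq_empty {u : Fin k → ℝ} {m : ℝ} (h : mixedEdges u m = ∅)
    {i : Fin k} (hi : u i = m) (j : Fin k) : u j = m := by
  refine (iff_of_forall_iff_pred (P := fun j => u j = m) (fun e he => ?_) i j).1 hi
  have := filter_eq_empty_iff.1 h (mem_univ e)
  tauto

theorem eventually_plateau_gap {u : Fin k → ℝ} {m : ℝ} (hmu : ∀ j, m ≤ u j) :
    ∀ᶠ ε in 𝓝 0, ∀ j, u j ≠ m → m + ε ≤ u j := by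
  refine eventually_all.2 fun j => ?_
  by_cases hj : u j = m
  · exact .of_forall fun _ h => absurd hj h
  · filter_upwards [gt_mem_nhds (sub_pos.2 ((hmu j).lt_of_ne' hj))] with ε hε _
    linarith

theorem hasDerivAt_fidelity_line {p : ℝ} (hp : 1 < p) (L f u d : Fin k → ℝ) :
    HasDerivAt (fun ε => fidelity p L f (fun j => u j + ε * d j))
      (∑ j, L j * (p * |f j - u j| ^ (p - 2) * (f j - u j) * -d j)) 0 := by
  refine HasDerivAt.fun_sum fun j _ => HasDerivAt.const_mul (L j) ?_
  have hline : HasDerivAt (fun ε : ℝ => f j - (u j + ε * d j)) (-d j) 0 := by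
    simpa using ((hasDerivAt_id (0 : ℝ)).mul_const (d j)).const_add (u j) |>.const_sub (f j)
  exact (hasDerivAt_abs_rpow (f j - u j) hp).comp_of_eq 0 hline (by simp)

end Plateau

section Minimizer

variable {k : ℕ} {lam p : ℝ} {L f u : Fin k → ℝ}

theorem G_max_lt (hlam : 0 < lam) (hp : 0 < p) (hL : ∀ i, 0 < L i) {c : ℝ}
    (hc : ∀ i, c ≤ f i) {v : Fin k → ℝ} (hv : ∃ i, v i < c) :
    G k lam p L f (fun i => max (v i) c) < G k lam p L f v := by
  rw [G_eq, G_eq]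
  exact add_lt_add_of_le_of_lt (totalVariation_max_le v c)
    (mul_lt_mul_of_pos_left (fidelity_max_lt hp hL hc hv) hlam)

theorem le_of_minimizer (hlam : 0 < lam) (hp : 0 < p) (hL : ∀ i, 0 < L i) {c : ℝ}
    (hc : ∀ i, c ≤ f i) (hu : ∀ v, G k lam p L f u ≤ G k lam p L f v) (i : Fin k) :
    c ≤ u i := by
  by_contra! hi
  exact (G_max_lt hlam hp hL hc ⟨i, hi⟩).not_ge (hu _)

theorem minimizer_neg (hu : ∀ v, G k lam p L f u ≤ G k lam p L f v) (v : Fin k → ℝ) :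
    G k lam p L (-f) (-u) ≤ G k lam p L (-f) v := by
  rw [G_neg, ← neg_neg v, G_neg]
  exact hu _

theorem minimizer_plateau_slope_nonpos (hp : 1 < p) {m : ℝ} (hmu : ∀ j, m ≤ u j)
    (hu : ∀ v, G k lam p L f u ≤ G k lam p L f v) :
    #(mixedEdges u m) + lam * ∑ j, L j * (p * |f j - u j| ^ (p - 2) * (f j - u j) *
      if u j = m then 1 else 0) ≤ 0 := by
  have hderiv : HasDerivAt (fun ε => totalVariation u - ε * #(mixedEdges u m) +
        lam * fidelity p L f (fun j => u j + ε * if u j = m then 1 else 0))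
      (-(#(mixedEdges u m) + lam * ∑ j, L j * (p * |f j - u j| ^ (p - 2) * (f j - u j) *
        if u j = m then 1 else 0))) 0 := by
    refine (((hasDerivAt_mul_const (#(mixedEdges u m) : ℝ)).const_sub
      (totalVariation u)).fun_add ((hasDerivAt_fidelity_line hp L f u
        fun j => if u j = m then 1 else 0).const_mul lam)).congr_deriv ?_
    simp only [mul_neg, sum_neg_distrib]
    ring
  refine neg_nonneg.1 (nonneg_of_hasDerivAt_of_eventually_ge hderiv ?_)
  filter_upwards [nhdsWithin_le_nhds (eventually_plateau_gap hmu), self_mem_nhdsWithin]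
    with ε hgap (hε : 0 < ε)
  simp only [zero_add, zero_mul, sub_zero, add_zero]
  rw [← totalVariation_add_plateau hε.le hgap, ← G_eq, ← G_eq]
  exact hu _

theorem lt_of_minimizer (hlam : 0 < lam) (hp : 1 < p) (hL : ∀ i, 0 < L i) {m : ℝ}
    (hmf : ∀ j, m ≤ f j) (hfm : ∃ j, f j ≠ m) (hu : ∀ v, G k lam p L f u ≤ G k lam p L f v)
    (i : Fin k) : m < u i := by
  have hp0 : 0 < p := by linarith
  have hmu := le_of_minimizer hlam hp0 hL hmf hu
  refine (hmu i).lt_of_ne fun hi => ?_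
  have hterm (j : Fin k) : 0 ≤ L j * (p * |f j - u j| ^ (p - 2) * (f j - u j) *
      if u j = m then 1 else 0) := by
    split_ifs with hj
    · have := hmf j
      exact mul_nonneg (hL j).le (by rw [hj]; positivity)
    · simp
  have hslope := minimizer_plateau_slope_nonpos hp hmu hu
  set S := ∑ j, L j * (p * |f j - u j| ^ (p - 2) * (f j - u j) * if u j = m then 1 else 0)
  have hS : 0 ≤ lam * S := mul_nonneg hlam.le (sum_nonneg fun j _ => hterm j)
  have hflat : mixedEdges u m = ∅ := by
    by_contra hne
    have : (1 : ℝ) ≤ #(mixedEdges u m) := by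
      exact_mod_cast card_pos.2 (nonempty_iff_ne_empty.2 hne)
    linarith
  have hall : ∀ j, u j = m := eq_of_mixedEdges_eq_empty hflat hi.symm
  obtain ⟨j, hj⟩ := hfm
  have hjpos : 0 < f j - m := sub_pos.2 ((hmf j).lt_of_ne' hj)
  have hpos : 0 < S := by
    refine sum_pos' (fun j _ => hterm j) ⟨j, mem_univ j, ?_⟩
    rw [if_pos (hall j), hall j]
    have := hL j
    positivity
  have := mul_pos hlam hpos
  simp only [hflat, card_empty, Nat.cast_zero, zero_add] at hslope
  linarith

end Minimizer

theorem stmt9_general (k : ℕ) (lam p : ℝ) (hlam : 0 < lam) (hp : 1 < p)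
    (L f : Fin k → ℝ) (hL : ∀ i, 0 < L i)
    (hf : ∃ i j : Fin k, f i ≠ f j)
    (u : Fin k → ℝ) (hu : ∀ v : Fin k → ℝ, G k lam p L f u ≤ G k lam p L f v) :
    (∀ i : Fin k, sInf (Set.range f) < u i ∧ u i < sSup (Set.range f)) ∧ u ≠ f := by
  obtain ⟨i₀, j₀, hij⟩ := hf
  have hne (c : ℝ) : ∃ j, f j ≠ c := by
    by_cases h : f i₀ = c
    exacts [⟨j₀, fun h' => hij (h.trans h'.symm)⟩, ⟨i₀, h⟩]
  have hfin := Set.finite_range f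
  have hlow (i : Fin k) : sInf (Set.range f) < u i :=
    lt_of_minimizer hlam hp hL (fun j => csInf_le hfin.bddBelow (Set.mem_range_self j))
      (hne _) hu i
  have hupp (i : Fin k) : u i < sSup (Set.range f) :=
    neg_lt_neg_iff.1 <| lt_of_minimizer hlam hp hL (f := -f) (u := -u)
      (fun j => neg_le_neg (le_csSup hfin.bddAbove (Set.mem_range_self j)))
      ((hne _).imp fun j hj => by simpa using hj) (minimizer_neg hu) i
  refine ⟨fun i => ⟨hlow i, hupp i⟩, ?_⟩
  rintro rfl
  obtain ⟨j, hj⟩ := (Set.range_nonempty_iff_nonempty.2 ⟨i₀⟩).csInf_mem hfin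
  exact (hlow j).ne' hj

/-- for `p > 1` and non-constant `f`, the minimizer stays strictly
between `min f` and `max f`; in particular `f` is never a minimizer. -/
theorem stmt9 (k : ℕ) (hk : 1 ≤ k) (lam p : ℝ) (hlam : 0 < lam) (hp : 1 < p)
    (L f : Fin k → ℝ) (hL : ∀ i, 0 < L i)
    (hf : ∃ i j : Fin k, f i ≠ f j)
    (u : Fin k → ℝ) (hu : ∀ v : Fin k → ℝ, G k lam p L f u ≤ G k lam p L f v) :
    (∀ i : Fin k, sInf (Set.range f) < u i ∧ u i < sSup (Set.range f)) ∧ u ≠ f :=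
  stmt9_general k lam p hlam hp L f hL hf u hu
end

section
/- Let p > 1 and let u = u^λ be the unique minimizer of G. If f_i < f_{i+1} < … < f_{i+r} (the data is strictly increasing on a block of indices), then u_i ≤ u_{i+1} ≤ … ≤ u_{i+r}. -/
/-!
If a minimizer `u` of `G` decreased across an edge `m → m + 1` on which the data increase, a
one-coordinate perturbation would strictly lower `G`. Either `u m > f m`, and then lowering `u m`
towards `max (f m) (u (m + 1))` brings `u m` closer to `f m`; or `u (m + 1) < u m ≤ f m < f (m + 1)`,
and then raising `u (m + 1)` to `u m` brings it closer to `f (m + 1)`. Moving a coordinate towards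
one of its neighbours shortens the jump to that neighbour by exactly the displacement and lengthens
the jump to the other neighbour by at most the displacement, so the total variation does not
increase while the fidelity term strictly decreases.
-/

open Function Finset Set

theorem abs_sub_add_abs_sub_of_mem_uIcc {α : Type*} [AddCommGroup α] [LinearOrder α]
    [IsOrderedAddMonoid α] {a b x : α} (h : x ∈ uIcc a b) : |b - x| + |x - a| = |b - a| := by
  rcases Set.mem_uIcc.1 h with ⟨hax, hxb⟩ | ⟨hbx, hxa⟩
  · rw [abs_of_nonneg (sub_nonneg.2 hxb), abs_of_nonneg (sub_nonneg.2 hax),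
      abs_of_nonneg (sub_nonneg.2 (hax.trans hxb))]
    abel
  · rw [abs_of_nonpos (sub_nonpos.2 hbx), abs_of_nonpos (sub_nonpos.2 hxa),
      abs_of_nonpos (sub_nonpos.2 (hbx.trans hxa))]
    abel

theorem Finset.sum_le_sum_of_eq_off {ι M : Type*} [Fintype ι] [DecidableEq ι] [AddCommMonoid M]
    [PartialOrder M] [IsOrderedAddMonoid M] {f g : ι → M} (s : Finset ι)
    (hs : ∑ i ∈ s, f i ≤ ∑ i ∈ s, g i) (hoff : ∀ i ∉ s, f i = g i) :
    ∑ i, f i ≤ ∑ i, g i := by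
  rw [← sum_add_sum_compl s f, ← sum_add_sum_compl s g,
    sum_congr rfl fun i hi => hoff i (Finset.mem_compl.1 hi)]
  exact add_le_add hs le_rfl

section Jump

variable {k : ℕ}

noncomputable def jump (v : Fin k → ℝ) (i : Fin k) : ℝ :=
  if i.val = 0 then 0 else |v i - v (pred i)|

theorem G_eq_sum_jump (lam p : ℝ) (L f v : Fin k → ℝ) :
    G k lam p L f v = ∑ i, jump v i + lam * ∑ i, L i * |f i - v i| ^ p :=
  rfl

theorem pred_eq_of_val_eq_succ {m n : Fin k} (hmn : (n : ℕ) = m + 1) : pred n = m :=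
  Fin.ext (by simp [pred, hmn])

theorem val_eq_succ_of_pred_eq {m i : Fin k} (hi : pred i = m) (him : i ≠ m) :
    (i : ℕ) = m + 1 := by
  rw [Fin.ext_iff] at hi
  rw [ne_eq, Fin.ext_iff] at him
  simp only [pred] at hi
  omega

theorem jump_of_val_eq_succ (a : Fin k → ℝ) {m n : Fin k} (hmn : (n : ℕ) = m + 1) :
    jump a n = |a n - a m| := by
  rw [jump, if_neg (by omega), pred_eq_of_val_eq_succ hmn]

theorem jump_update_of_ne (a : Fin k → ℝ) (x : ℝ) {m i : Fin k} (him : i ≠ m)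
    (hpi : pred i ≠ m) : jump (update a m x) i = jump a i := by
  simp only [jump, update_of_ne him, update_of_ne hpi]

theorem jump_update_le (a : Fin k → ℝ) (m : Fin k) (x : ℝ) (i : Fin k) :
    jump (update a m x) i ≤ jump a i + |x - a m| := by
  by_cases him : i = m
  · subst him
    by_cases h0 : (i : ℕ) = 0
    · simp [jump, h0]
    · have hpi : pred i ≠ i := fun h => h0 (by
        have := congrArg Fin.val h
        simp only [pred] at this
        omega)
      simp only [jump, if_neg h0, update_self, update_of_ne hpi]
      linarith [abs_sub_le x (a i) (a (pred i))]
  by_cases hpi : pred i = m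
  · rw [jump_of_val_eq_succ _ (val_eq_succ_of_pred_eq hpi him),
      jump_of_val_eq_succ _ (val_eq_succ_of_pred_eq hpi him), update_of_ne him, update_self,
      abs_sub_comm x]
    exact abs_sub_le _ _ _
  · rw [jump_update_of_ne a x him hpi]
    linarith [abs_nonneg (x - a m)]

variable {a : Fin k → ℝ} {m n : Fin k} {x : ℝ}

theorem sum_jump_update_le_of_mem_uIcc_right (hmn : (n : ℕ) = m + 1)
    (hx : x ∈ uIcc (a m) (a n)) : ∑ i, jump (update a m x) i ≤ ∑ i, jump a i := by
  have hmn' : m ≠ n := fun h => by rw [h] at hmn; omega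
  refine sum_le_sum_of_eq_off {m, n} ?_ fun i hi => ?_
  · rw [sum_pair hmn', sum_pair hmn', jump_of_val_eq_succ _ hmn, jump_of_val_eq_succ _ hmn,
      update_self, update_of_ne hmn'.symm]
    linarith [jump_update_le a m x m, abs_sub_add_abs_sub_of_mem_uIcc hx]
  · simp only [Finset.mem_insert, Finset.mem_singleton, not_or] at hi
    refine jump_update_of_ne a x hi.1 fun hpi => hi.2 (Fin.ext ?_)
    rw [val_eq_succ_of_pred_eq hpi hi.1, hmn]

theorem sum_jump_update_le_of_mem_uIcc_left (hmn : (n : ℕ) = m + 1)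
    (hx : x ∈ uIcc (a m) (a n)) : ∑ i, jump (update a n x) i ≤ ∑ i, jump a i := by
  have hmn' : m ≠ n := fun h => by rw [h] at hmn; omega
  have hjump_n : jump (update a n x) n + |x - a n| = jump a n := by
    rw [jump_of_val_eq_succ _ hmn, jump_of_val_eq_succ _ hmn, update_self, update_of_ne hmn',
      ← abs_sub_add_abs_sub_of_mem_uIcc hx, abs_sub_comm x (a n), add_comm]
  by_cases hnk : (n : ℕ) + 1 < k
  · set o : Fin k := ⟨n + 1, hnk⟩
    have hno : n ≠ o := fun h => by simp [Fin.ext_iff, o] at h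
    refine sum_le_sum_of_eq_off {n, o} ?_ fun i hi => ?_
    · rw [sum_pair hno, sum_pair hno]
      linarith [jump_update_le a n x o]
    · simp only [Finset.mem_insert, Finset.mem_singleton, not_or] at hi
      refine jump_update_of_ne a x hi.1 fun hpi => hi.2 (Fin.ext ?_)
      exact val_eq_succ_of_pred_eq hpi hi.1
  · refine sum_le_sum_of_eq_off {n} ?_ fun i hi => ?_
    · simp only [sum_singleton]
      linarith [abs_nonneg (x - a n)]
    · have hin : i ≠ n := by simpa using hi
      exact jump_update_of_ne a x hin fun hpi => hnk (val_eq_succ_of_pred_eq hpi hin ▸ i.isLt)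

end Jump

theorem sum_fidelity_update_lt {k : ℕ} {p : ℝ} (hp : 0 < p) {L f a : Fin k → ℝ} {m : Fin k}
    (hLm : 0 < L m) {x : ℝ} (hx : |f m - x| < |f m - a m|) :
    ∑ i, L i * |f i - update a m x i| ^ p < ∑ i, L i * |f i - a i| ^ p := by
  have hm : L m * |f m - update a m x m| ^ p < L m * |f m - a m| ^ p := by
    rw [update_self]
    gcongr
  refine sum_lt_sum (fun i _ => ?_) ⟨m, mem_univ m, hm⟩
  by_cases him : i = m
  · exact him ▸ hm.le
  · rw [update_of_ne him]

theorem G_update_lt {k : ℕ} {lam p : ℝ} (hlam : 0 < lam) (hp : 0 < p) {L f a : Fin k → ℝ}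
    {m : Fin k} (hLm : 0 < L m) {x : ℝ}
    (hjump : ∑ i, jump (update a m x) i ≤ ∑ i, jump a i) (hx : |f m - x| < |f m - a m|) :
    G k lam p L f (update a m x) < G k lam p L f a := by
  rw [G_eq_sum_jump, G_eq_sum_jump]
  exact add_lt_add_of_le_of_lt hjump
    (mul_lt_mul_of_pos_left (sum_fidelity_update_lt hp hLm hx) hlam)

theorem minimizer_le_of_data_lt {k : ℕ} {lam p : ℝ} (hlam : 0 < lam) (hp : 0 < p)
    {L f u : Fin k → ℝ} (hu : ∀ v, G k lam p L f u ≤ G k lam p L f v) {m n : Fin k}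
    (hLm : 0 < L m) (hLn : 0 < L n) (hmn : (n : ℕ) = m + 1) (hf : f m < f n) : u m ≤ u n := by
  by_contra! hnm
  rcases le_or_gt (u m) (f m) with hmf | hfm
  · have hx : |f n - u m| < |f n - u n| := by
      rw [abs_of_pos (by linarith), abs_of_pos (by linarith)]
      linarith
    exact (hu _).not_gt <| G_update_lt hlam hp hLn
      (sum_jump_update_le_of_mem_uIcc_left hmn left_mem_uIcc) hx
  · set x := max (f m) (u n)
    have hxm : x < u m := max_lt hfm hnm
    have hx : |f m - x| < |f m - u m| := by
      rw [abs_of_nonpos (by linarith [le_max_left (f m) (u n)]), abs_of_neg (by linarith)]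
      linarith
    exact (hu _).not_gt <| G_update_lt hlam hp hLm
      (sum_jump_update_le_of_mem_uIcc_right hmn
        (Set.mem_uIcc.2 (Or.inr ⟨le_max_right _ _, hxm.le⟩))) hx

/-- where the data `f` is strictly increasing on a block of indices,
the minimizer is nondecreasing on that block. -/
theorem stmt16 (k : ℕ) (lam p : ℝ) (hlam : 0 < lam) (hp : 1 < p)
    (L f : Fin k → ℝ) (hL : ∀ i, 0 < L i)
    (u : Fin k → ℝ) (hu : ∀ v : Fin k → ℝ, G k lam p L f u ≤ G k lam p L f v)
    (i r : ℕ) (hir : i + r < k)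
    (hf : ∀ j (_h1 : i ≤ j) (_h2 : j < i + r), f ⟨j, by omega⟩ < f ⟨j + 1, by omega⟩) :
    ∀ j (_h1 : i ≤ j) (_h2 : j < i + r), u ⟨j, by omega⟩ ≤ u ⟨j + 1, by omega⟩ :=
  fun j hj₁ hj₂ => minimizer_le_of_data_lt hlam (by linarith) hu (hL _) (hL _) rfl (hf j hj₁ hj₂)
end
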